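/- arXiv:2002.06299 — 2 statements merged into one kernel-verified Lean document; each statement's English description precedes it below -/
import Mathlib

section
/- Let γ ∈ [0,1), v ∈ [0, r_max/(1−γ)], and suppose v = β + α v where α ∈ (0, γ] and β ≥ 0. If α̂ ∈ (0, γ], β̂ ≥ 0, and v̂ satisfies v̂ = β̂ + α̂ v̂, then |v̂ − v| ≤ (1/(1−γ)) · (|β̂ − β| + |α̂ − α| · v). -/
/-!
Subtracting the two fixed-point equations gives the exact error identity
`(1 - α̂) (v̂ - v) = (β̂ - β) + (α̂ - α) v`; the factor `1 - α̂` is at least `1 - γ > 0`,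
so dividing by it and applying the triangle inequality yields the bound.
-/

theorem one_sub_smul_sub_of_eq_add_smul {R E : Type*} [CommRing R] [AddCommGroup E]
    [Module R E] {v β vh βh : E} {α αh : R}
    (heq : v = β + α • v) (heqh : vh = βh + αh • vh) :
    (1 - αh) • (vh - v) = (βh - β) + (αh - α) • v := by
  linear_combination (norm := module) heqh - heq

theorem norm_sub_le_of_eq_add_smul {E : Type*} [NormedAddCommGroup E] [NormedSpace ℝ E]
    {v β vh βh : E} {α αh : ℝ} (hαh : αh < 1)
    (heq : v = β + α • v) (heqh : vh = βh + αh • vh) :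
    ‖vh - v‖ ≤ (‖βh - β‖ + |αh - α| * ‖v‖) / (1 - αh) := by
  have hpos : 0 < 1 - αh := sub_pos.mpr hαh
  rw [le_div_iff₀ hpos]
  calc ‖vh - v‖ * (1 - αh) = ‖(1 - αh) • (vh - v)‖ := by
        rw [norm_smul, Real.norm_of_nonneg hpos.le, mul_comm]
    _ = ‖(βh - β) + (αh - α) • v‖ := by rw [one_sub_smul_sub_of_eq_add_smul heq heqh]
    _ ≤ ‖βh - β‖ + |αh - α| * ‖v‖ := by
        simpa only [norm_smul, Real.norm_eq_abs] using norm_add_le (βh - β) ((αh - α) • v)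

theorem loop_error_propagation_general
    (γ rmax v α β vh αh βh : ℝ)
    (hγ : γ ∈ Set.Ico (0:ℝ) 1)
    (hv : v ∈ Set.Icc 0 (rmax / (1 - γ)))
    (heq : v = β + α * v)
    (hαh : αh ∈ Set.Ioc 0 γ) (heqh : vh = βh + αh * vh) :
    |vh - v| ≤ (1 / (1 - γ)) * (|βh - β| + |αh - α| * v) := by
  have h1γ : 0 < 1 - γ := sub_pos.mpr hγ.2
  have hbound := norm_sub_le_of_eq_add_smul (E := ℝ) (hαh.2.trans_lt hγ.2) heq heqh
  simp only [Real.norm_eq_abs, abs_of_nonneg hv.1] at hbound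
  calc |vh - v| ≤ (|βh - β| + |αh - α| * v) / (1 - αh) := hbound
    _ ≤ (|βh - β| + |αh - α| * v) / (1 - γ) := by
        gcongr
        · exact add_nonneg (abs_nonneg _) (mul_nonneg (abs_nonneg _) hv.1)
        · exact hαh.2
    _ = (1 / (1 - γ)) * (|βh - β| + |αh - α| * v) := by rw [one_div_mul_eq_div]

/-- Deterministic error-propagation step for the loop estimator:
if `v = β + α v` and `v̂ = β̂ + α̂ v̂` with `α, α̂ ∈ (0, γ]`, `γ < 1`, then
`|v̂ − v| ≤ (1/(1−γ)) (|β̂ − β| + |α̂ − α| v)`. -/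
theorem loop_error_propagation
    (γ rmax v α β vh αh βh : ℝ)
    (hγ : γ ∈ Set.Ico (0:ℝ) 1)
    (hv : v ∈ Set.Icc 0 (rmax / (1 - γ)))
    (hα : α ∈ Set.Ioc 0 γ) (hβ : 0 ≤ β) (heq : v = β + α * v)
    (hαh : αh ∈ Set.Ioc 0 γ) (hβh : 0 ≤ βh) (heqh : vh = βh + αh * vh) :
    |vh - v| ≤ (1 / (1 - γ)) * (|βh - β| + |αh - α| * v) :=
  loop_error_propagation_general γ rmax v α β vh αh βh hγ hv heq hαh heqh
end

section
/- For the Lambert W function (principal branch), if x > e then log x − log log x < W(x), where W is defined by W(x)·e^{W(x)} = x for x ≥ 0. -/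
open Real

lemma one_lt_of_exp_one_lt_mul_exp {w : ℝ} (h : exp 1 < w * exp w) : 1 < w := by
  by_contra! hw
  have : w * exp w ≤ 1 * exp 1 :=
    mul_le_mul hw (exp_le_exp.mpr hw) (exp_pos w).le zero_le_one
  linarith

lemma log_mul_exp_self {w : ℝ} (hw : 0 < w) : log (w * exp w) = log w + w := by
  rw [log_mul hw.ne' (exp_ne_zero w), log_exp]

lemma log_sub_log_log_mul_exp_lt {w : ℝ} (hw : 1 < w) :
    log (w * exp w) - log (log (w * exp w)) < w := by
  have hw₀ : 0 < w := zero_lt_one.trans hw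
  have hlog_pos : 0 < log w := log_pos hw
  have hloglog : log w < log (log (w * exp w)) := by
    rw [log_mul_exp_self hw₀]
    exact log_lt_log hw₀ (by linarith)
  rw [log_mul_exp_self hw₀] at hloglog ⊢
  linarith

theorem lambertW_lower_bound_general (x w : ℝ) (hx : Real.exp 1 < x)
    (hWx : w * Real.exp w = x) :
    Real.log x - Real.log (Real.log x) < w := by
  subst hWx
  exact log_sub_log_log_mul_exp_lt (one_lt_of_exp_one_lt_mul_exp hx)

/-- Lambert W lower bound: if `x > e` and `w ≥ 0` satisfies `w eʷ = x`
(i.e. `w = W(x)`, the principal branch), then `log x − log log x < w`. -/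
theorem lambertW_lower_bound (x w : ℝ) (hx : Real.exp 1 < x)
    (hw : 0 ≤ w) (hWx : w * Real.exp w = x) :
    Real.log x - Real.log (Real.log x) < w :=
  lambertW_lower_bound_general x w hx hWx
end
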